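/- For nonnegative reals $w_i$ and nonnegative size parameters: given a partition of $[n]$ into $A$ and $B$, with values $v_i\ge 0$ for $i\in A$ and $\mu_j \ge 0$ for $j\in B$, the cross-term $\sum_{i\in A, j\in B} \min(w_j v_i, w_i \mu_j)$ is at most $\sum_{i,j\in A, j\ge i} \min(w_j v_i, w_i v_j) + \sum_{i,j\in B, j\ge i} \min(w_j \mu_i, w_i \mu_j)$. -/

import Mathlib

/-!
With `t i = x i / w i`, the kernel `min (w j * x i) (w i * x j)` equals
`w i * w j * min (t i) (t j)`, and the min kernel on nonnegative reals is positive semidefinite.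
Evaluating its quadratic form at the weights `w` on `A` and `-w` on `B` (on the disjoint union of
`A` and `B`) bounds twice the cross term by the two full within-part double sums, and by symmetry
each of these is at most twice its upper-triangular half.
-/

open Finset

theorem sum_sum_le_two_nsmul_sum_sum_filter_le {ι M : Type*} [LinearOrder ι]
    [AddCommMonoid M] [PartialOrder M] [IsOrderedAddMonoid M] (s : Finset ι) (f : ι → ι → M)
    (hsymm : ∀ i j, f i j = f j i) (hdiag : ∀ i ∈ s, 0 ≤ f i i) :
    ∑ i ∈ s, ∑ j ∈ s, f i j ≤ 2 • ∑ i ∈ s, ∑ j ∈ s with i ≤ j, f i j := by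
  have hlower : ∑ i ∈ s, ∑ j ∈ s with j < i, f i j = ∑ i ∈ s, ∑ j ∈ s with i < j, f i j := by
    rw [sum_comm' (t' := s) (s' := fun j => s.filter (j < ·))]
    · simp_rw [hsymm]
    · intro i j
      simp only [mem_filter]
      tauto
  have hstrict : ∑ i ∈ s, ∑ j ∈ s with i < j, f i j ≤ ∑ i ∈ s, ∑ j ∈ s with i ≤ j, f i j := by
    refine sum_le_sum fun i hi => sum_le_sum_of_subset_of_nonneg ?_ fun j hj hj' => ?_
    · exact monotone_filter_right s fun _ _ => le_of_lt
    · simp only [mem_filter] at hj hj'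
      obtain rfl := hj.2.lt_or_eq.resolve_left fun h => hj' ⟨hj.1, h⟩
      exact hdiag i hi
  calc ∑ i ∈ s, ∑ j ∈ s, f i j
      = ∑ i ∈ s, ∑ j ∈ s with i ≤ j, f i j + ∑ i ∈ s, ∑ j ∈ s with j < i, f i j := by
        simp_rw [← sum_add_distrib, ← not_le, sum_filter_add_sum_filter_not]
    _ ≤ 2 • ∑ i ∈ s, ∑ j ∈ s with i ≤ j, f i j := by
        rw [hlower, two_nsmul]
        exact add_le_add_right hstrict _

section OrderedRing

variable {R : Type*} [CommRing R] [LinearOrder R] [IsStrictOrderedRing R]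

theorem sum_sum_mul_mul_min_nonneg {ι : Type*} (s : Finset ι) (a t : ι → R)
    (ht : ∀ i ∈ s, 0 ≤ t i) : 0 ≤ ∑ i ∈ s, ∑ j ∈ s, a i * a j * min (t i) (t j) := by
  classical
  suffices h : ∀ c, (∀ i ∈ s, c ≤ t i) →
      0 ≤ ∑ i ∈ s, ∑ j ∈ s, a i * a j * min (t i - c) (t j - c) by
    simpa using h 0 ht
  clear ht
  induction s using Finset.induction_on_min_value t with
  | empty => simp
  | insert k s hk hmin ih =>
    intro c hc
    -- Shifting by the smallest value `t k` splits off `(t k - c) * (∑ a) ^ 2` and kills the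
    -- row and column of `k`.
    set u := insert k s
    have hshift : ∀ i j, a i * a j * min (t i - c) (t j - c) =
        (t k - c) * (a i * a j) + a i * a j * min (t i - t k) (t j - t k) := by
      intro i j
      rw [← sub_add_sub_cancel (t i) (t k) c, ← sub_add_sub_cancel (t j) (t k) c,
        min_add_add_right]
      ring
    have hdrop : ∑ i ∈ u, ∑ j ∈ u, a i * a j * min (t i - t k) (t j - t k) =
        ∑ i ∈ s, ∑ j ∈ s, a i * a j * min (t i - t k) (t j - t k) := by
      have hk0 : ∀ i ∈ s, min (t i - t k) 0 = 0 := fun i hi =>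
        min_eq_right (sub_nonneg.2 (hmin i hi))
      simp only [u, sum_insert hk, sub_self, min_comm (0 : R)]
      simp +contextual [hk0]
    calc (0 : R) ≤ (t k - c) * (∑ i ∈ u, a i) ^ 2 +
          ∑ i ∈ s, ∑ j ∈ s, a i * a j * min (t i - t k) (t j - t k) :=
          add_nonneg (mul_nonneg (sub_nonneg.2 (hc k (mem_insert_self k s))) (sq_nonneg _))
            (ih (t k) hmin)
      _ = ∑ i ∈ u, ∑ j ∈ u, a i * a j * min (t i - c) (t j - c) := by
          simp only [hshift, sum_add_distrib, ← mul_sum, hdrop, sq, sum_mul_sum]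

end OrderedRing

section OrderedField

variable {K : Type*} [Field K] [LinearOrder K] [IsStrictOrderedRing K]

theorem min_mul_eq_mul_mul_min_div {a b x y : K} (ha : 0 ≤ a) (hb : 0 ≤ b) (hx : 0 ≤ x)
    (hy : 0 ≤ y) : min (b * x) (a * y) = a * b * min (x / a) (y / b) := by
  -- At a zero weight both sides vanish, whatever the junk value of the quotient.
  rcases ha.eq_or_lt with rfl | ha
  · simp [mul_nonneg hb hx]
  rcases hb.eq_or_lt with rfl | hb
  · simp [mul_nonneg ha.le hy]
  rw [mul_min_of_nonneg _ _ (by positivity)]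
  congr 1 <;> field_simp

theorem sum_sum_mul_mul_min_mul_nonneg {ι : Type*} (s : Finset ι) (σ w x : ι → K)
    (hw : ∀ i ∈ s, 0 ≤ w i) (hx : ∀ i ∈ s, 0 ≤ x i) :
    0 ≤ ∑ i ∈ s, ∑ j ∈ s, σ i * σ j * min (w j * x i) (w i * x j) := by
  refine (sum_sum_mul_mul_min_nonneg s (σ * w) (x / w) fun i hi =>
    div_nonneg (hx i hi) (hw i hi)).trans_eq
      (sum_congr rfl fun i hi => sum_congr rfl fun j hj => ?_)
  rw [min_mul_eq_mul_mul_min_div (hw i hi) (hw j hj) (hx i hi) (hx j hj)]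
  simp only [Pi.mul_apply, Pi.div_apply]
  ring

theorem two_mul_sum_sum_min_mul_le {α β : Type*} (A : Finset α) (B : Finset β)
    (w x : α → K) (w' y : β → K) (hw : ∀ i ∈ A, 0 ≤ w i) (hx : ∀ i ∈ A, 0 ≤ x i)
    (hw' : ∀ j ∈ B, 0 ≤ w' j) (hy : ∀ j ∈ B, 0 ≤ y j) :
    2 * ∑ i ∈ A, ∑ j ∈ B, min (w' j * x i) (w i * y j) ≤
      ∑ i ∈ A, ∑ j ∈ A, min (w j * x i) (w i * x j) +
        ∑ i ∈ B, ∑ j ∈ B, min (w' j * y i) (w' i * y j) := by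
  have hpsd := sum_sum_mul_mul_min_mul_nonneg (A.disjSum B) (Sum.elim 1 (-1))
    (Sum.elim w w') (Sum.elim x y) (by simpa using ⟨hw, hw'⟩) (by simpa using ⟨hx, hy⟩)
  simp only [sum_disjSum, Sum.elim_inl, Sum.elim_inr, Pi.one_apply, Pi.neg_apply, one_mul,
    mul_one, neg_mul, mul_neg, sum_neg_distrib, sum_add_distrib] at hpsd
  have hswap : ∑ i ∈ B, ∑ j ∈ A, min (w j * y i) (w' i * x j) =
      ∑ i ∈ A, ∑ j ∈ B, min (w' j * x i) (w i * y j) := by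
    rw [sum_comm]
    exact sum_congr rfl fun _ _ => sum_congr rfl fun _ _ => min_comm _ _
  linarith

end OrderedField

theorem cross_term_bound_general {n : ℕ} (w v μ : Fin n → ℝ)
    (hw : ∀ i, 0 ≤ w i) (hv : ∀ i, 0 ≤ v i) (hμ : ∀ i, 0 ≤ μ i)
    (A B : Finset (Fin n)) :
    ∑ i ∈ A, ∑ j ∈ B, min (w j * v i) (w i * μ j) ≤
    (∑ i ∈ A, ∑ j ∈ A.filter (fun j => i ≤ j), min (w j * v i) (w i * v j)) +
    (∑ i ∈ B, ∑ j ∈ B.filter (fun j => i ≤ j), min (w j * μ i) (w i * μ j)) := by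
  have hA := sum_sum_le_two_nsmul_sum_sum_filter_le A (fun i j => min (w j * v i) (w i * v j))
    (fun _ _ => min_comm _ _) fun i _ => by simpa using mul_nonneg (hw i) (hv i)
  have hB := sum_sum_le_two_nsmul_sum_sum_filter_le B (fun i j => min (w j * μ i) (w i * μ j))
    (fun _ _ => min_comm _ _) fun i _ => by simpa using mul_nonneg (hw i) (hμ i)
  have hcross := two_mul_sum_sum_min_mul_le A B w v w μ (fun i _ => hw i) (fun i _ => hv i)
    (fun i _ => hw i) fun i _ => hμ i
  simp only [two_nsmul] at hA hB
  linarith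

/-- Cross-term bound: the interaction term between probed jobs `A` (with realized
sizes `v`) and unprobed jobs `B` (with expected sizes `μ`) is bounded by the sum of
the within-part terms. -/
theorem cross_term_bound {n : ℕ} (w v μ : Fin n → ℝ)
    (hw : ∀ i, 0 ≤ w i) (hv : ∀ i, 0 ≤ v i) (hμ : ∀ i, 0 ≤ μ i)
    (A B : Finset (Fin n)) (hdisj : Disjoint A B) (hcover : A ∪ B = Finset.univ) :
    ∑ i ∈ A, ∑ j ∈ B, min (w j * v i) (w i * μ j) ≤
    (∑ i ∈ A, ∑ j ∈ A.filter (fun j => i ≤ j), min (w j * v i) (w i * v j)) +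
    (∑ i ∈ B, ∑ j ∈ B.filter (fun j => i ≤ j), min (w j * μ i) (w i * μ j)) :=
  cross_term_bound_general w v μ hw hv hμ A B
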